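/- Let k be an algebraically closed field of characteristic ℓ > 0. Suppose G = NH is a finite group with N ⊴ G and H ≤ G such that M := N ∩ H is normal in N. Let χ be a simple kN-module, ξ a simple kM-module lying under χ, and φ a simple kN_ξ-module lying over ξ such that χ ≅ Ind^N_{N_ξ} φ. Assume further that H_χ ≤ H_ξ and that ξ ≅ Res^{N_ξ}_M φ. Then: (i) H_χ = H_φ, and this group is contained in H_ξ; (ii) the following three conditions are equivalent: χ extends to G_χ; ξ extends to H_χ; φ extends to H_χ N_ξ. -/

import Mathlib

/-!
Write `M = N ⊓ H`. The key point is Clifford's: if an automorphism `A` of `Ind_{N_ξ}^N φ`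
conjugates the `N`-action by an element `c` stabilizing `ξ`, then `A` preserves the functions
supported on `N_ξ`: at `x ∉ N_ξ` it would yield a nonzero intertwiner from `ξ` to `ξ^{xc}`,
forcing `xc`, hence `x`, into the stabilizer of `ξ`.
These functions form a copy of `φ`, so cutting down to them turns a `g`-conjugating automorphism
of `χ ≅ Ind φ` (`g ∈ H_χ ≤ H_ξ`) into one of `φ`, and an extension of `χ` to `G_χ` into an
extension of `Res_M φ ≅ ξ` to `H_χ`; conversely `φ^g ≅ φ` induces `χ^g ≅ χ`.

If `ξ` extends to `τ` on `H_χ` (transported to the space of `φ`), then for `h ∈ H_χ` both `τ h`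
and a `h`-conjugating automorphism of `φ` conjugate `Res_M φ`, which is simple, so by Schur they
differ by a scalar; hence `τ` normalizes `φ` and the two glue to a representation `σ` of
`H_χ N_ξ`. As `G_χ = (H_χ N_ξ) N` and `H_χ N_ξ ∩ N = N_ξ`, Mackey's formula shows that
`Ind_{H_χ N_ξ}^{G_χ} σ` extends `Ind φ ≅ χ`.
-/

noncomputable section

open CategoryTheory Pointwise

universe u

variable {k : Type u} [Field k] {G : Type u} [Group G]

/-- `g` conjugates the representation `ρ` of the subgroup `K` to an isomorphic one. -/
def IsConjInv {V : Type u} [AddCommGroup V] [Module k V] (K : Subgroup G)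
    (ρ : Representation k ↥K V) (g : G) : Prop :=
  ∃ e : V ≃ₗ[k] V, ∀ (x : G) (hx : x ∈ K) (hx' : g * x * g⁻¹ ∈ K) (v : V),
    e (ρ ⟨x, hx⟩ v) = ρ ⟨g * x * g⁻¹, hx'⟩ (e v)

/-- The stabilizer, inside a subgroup `X` normalizing `K`, of the isomorphism class of a
representation `ρ` of `K`. -/
def stabilizerIn {V : Type u} [AddCommGroup V] [Module k V] (X K : Subgroup G)
    (hX : ∀ g ∈ X, ∀ x ∈ K, g * x * g⁻¹ ∈ K)
    (ρ : Representation k ↥K V) : Subgroup G where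
  carrier := {g | g ∈ X ∧ IsConjInv K ρ g}
  one_mem' := by
    refine ⟨X.one_mem, LinearEquiv.refl k V, ?_⟩
    intro x hx hx' v
    have h1 : (⟨1 * x * 1⁻¹, hx'⟩ : ↥K) = ⟨x, hx⟩ := Subtype.ext (by group)
    rw [h1]
    rfl
  mul_mem' := by
    rintro a b ⟨haX, ea, hea⟩ ⟨hbX, eb, heb⟩
    refine ⟨X.mul_mem haX hbX, eb.trans ea, ?_⟩
    intro x hx hx' v
    have hb' : b * x * b⁻¹ ∈ K := hX b hbX x hx
    have ha' : a * (b * x * b⁻¹) * a⁻¹ ∈ K := hX a haX _ hb'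
    have key : (⟨a * (b * x * b⁻¹) * a⁻¹, ha'⟩ : ↥K) = ⟨a * b * x * (a * b)⁻¹, hx'⟩ :=
      Subtype.ext (by group)
    simp only [LinearEquiv.trans_apply]
    rw [heb x hx hb' v, hea _ hb' ha' (eb v), key]
  inv_mem' := by
    rintro a ⟨haX, e, he⟩
    refine ⟨X.inv_mem haX, e.symm, ?_⟩
    intro x hx hx' v
    have h2 : a * (a⁻¹ * x * a⁻¹⁻¹) * a⁻¹ ∈ K := hX a haX _ hx'
    have key : (⟨a * (a⁻¹ * x * a⁻¹⁻¹) * a⁻¹, h2⟩ : ↥K) = ⟨x, hx⟩ := Subtype.ext (by group)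
    have h3 := he _ hx' h2 (e.symm v)
    rw [key, e.apply_symm_apply] at h3
    rw [← h3, e.symm_apply_apply]

/-- A representation is simple (irreducible). -/
def RepIsSimple {Γ V : Type u} [Group Γ] [AddCommGroup V] [Module k V]
    (ρ : Representation k Γ V) : Prop :=
  Nontrivial V ∧ ∀ p : Submodule k V, (∀ (g : Γ) (v : V), v ∈ p → ρ g v ∈ p) → p = ⊥ ∨ p = ⊤

/-- The carrier of the representation of `Γ` induced along `ι : K →* Γ`
(realized as functions `Γ → V` with the usual equivariance property). -/
def indCarrier {Γ K V : Type u} [Group Γ] [Group K] [AddCommGroup V] [Module k V]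
    (ι : K →* Γ) (ρ : Representation k K V) : Submodule k (Γ → V) where
  carrier := {f | ∀ (h : K) (x : Γ), f (ι h * x) = ρ h (f x)}
  add_mem' := fun {f g} hf hg => by
    intro h x
    simp only [Pi.add_apply, hf h x, hg h x, map_add]
  zero_mem' := by
    intro h x
    simp
  smul_mem' := fun c {f} hf => by
    intro h x
    simp only [Pi.smul_apply, hf h x, map_smul]

/-- The representation of `Γ` induced along `ι : K →* Γ` from `ρ`. -/
def indRep {Γ K V : Type u} [Group Γ] [Group K] [AddCommGroup V] [Module k V]
    (ι : K →* Γ) (ρ : Representation k K V) :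
    Representation k Γ ↥(indCarrier ι ρ) where
  toFun g :=
    { toFun := fun f => ⟨fun x => (f : Γ → V) (x * g), by
        intro h x
        simpa [mul_assoc] using f.2 h (x * g)⟩
      map_add' := fun f f' => rfl
      map_smul' := fun c f => rfl }
  map_one' := by
    ext f x
    simp
  map_mul' g g' := by
    ext f x
    simp [mul_assoc]

/-- Two representations of the same group are isomorphic. -/
def IsRepIso {Γ V W : Type u} [Group Γ] [AddCommGroup V] [Module k V] [AddCommGroup W]
    [Module k W] (ρ₁ : Representation k Γ V) (ρ₂ : Representation k Γ W) : Prop :=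
  ∃ e : V ≃ₗ[k] W, ∀ (g : Γ) (v : V), e (ρ₁ g v) = ρ₂ g (e v)

/-- For subgroups `K ≤ L`, the `L`-representation `ρL` lies over the `K`-representation `ρK`,
i.e. there is a nonzero `K`-equivariant map from `ρK` to the restriction of `ρL`. -/
def LiesOverDep {V W : Type u} [AddCommGroup V] [Module k V] [AddCommGroup W] [Module k W]
    (K L : Subgroup G) (ρK : Representation k ↥K V) (ρL : Representation k ↥L W) : Prop :=
  ∃ T : V →ₗ[k] W, T ≠ 0 ∧ ∀ (x : G) (hK : x ∈ K) (hL : x ∈ L) (v : V),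
    T (ρK ⟨x, hK⟩ v) = ρL ⟨x, hL⟩ (T v)

/-- For subgroups `K ≤ L`, the restriction to `K` of the `L`-representation `ρL` is
isomorphic to `ρK`. -/
def RestrictIsoDep {V W : Type u} [AddCommGroup V] [Module k V] [AddCommGroup W] [Module k W]
    (K L : Subgroup G) (ρK : Representation k ↥K V) (ρL : Representation k ↥L W) : Prop :=
  ∃ e : V ≃ₗ[k] W, ∀ (x : G) (hK : x ∈ K) (hL : x ∈ L) (v : V),
    e (ρK ⟨x, hK⟩ v) = ρL ⟨x, hL⟩ (e v)

/-- For subgroups `K ≤ L`, the representation `ρ` of `K` extends to `L`: there is a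
representation of `L` whose restriction to `K` is isomorphic to `ρ`. -/
def RepExtendsDep {V : Type u} [AddCommGroup V] [Module k V]
    (K L : Subgroup G) (ρ : Representation k ↥K V) : Prop :=
  ∃ σ : Representation k ↥L V, ∃ e : V ≃ₗ[k] V, ∀ (g : G) (hK : g ∈ K) (hL : g ∈ L) (v : V),
    e (ρ ⟨g, hK⟩ v) = σ ⟨g, hL⟩ (e v)

lemma stabilizerIn_le {V : Type u} [AddCommGroup V] [Module k V] (X K : Subgroup G)
    (hX : ∀ g ∈ X, ∀ x ∈ K, g * x * g⁻¹ ∈ K) (ρ : Representation k ↥K V) :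
    stabilizerIn X K hX ρ ≤ X := fun _ hg => hg.1

lemma Representation.subgroup_apply_congr {K : Subgroup G} {V : Type u} [AddCommGroup V]
    [Module k V] (ρ : Representation k K V) {x y : G} (hx : x ∈ K) (hy : y ∈ K) (h : x = y) :
    ρ ⟨x, hx⟩ = ρ ⟨y, hy⟩ := by
  subst h
  rfl

lemma le_normalizer_of_conj_mem {X K : Subgroup G} (hX : ∀ g ∈ X, ∀ x ∈ K, g * x * g⁻¹ ∈ K) :
    X ≤ Subgroup.normalizer K := fun g hg x =>
  ⟨hX g hg x, fun hx => by simpa [mul_assoc] using hX g⁻¹ (X.inv_mem hg) _ hx⟩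

section SimpleRep

variable {Γ V W : Type u} [Group Γ] [AddCommGroup V] [Module k V] [AddCommGroup W] [Module k W]
  {ρ : Representation k Γ V} {σ : Representation k Γ W}

lemma RepIsSimple.isIrreducible (hρ : RepIsSimple ρ) : ρ.IsIrreducible where
  exists_pair_ne := by
    obtain ⟨v, hv⟩ := @exists_ne V hρ.1 0
    exact ⟨⊥, ⊤, fun h => hv (show v ∈ (⊥ : Subrepresentation ρ) from h ▸ trivial)⟩
  eq_bot_or_eq_top p := (hρ.2 p.toSubmodule p.apply_mem_toSubmodule).imp
    (fun h => Subrepresentation.toSubmodule_injective h)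
    (fun h => Subrepresentation.toSubmodule_injective h)

lemma RepIsSimple.bijective_of_ne_zero (hρ : RepIsSimple ρ) (hσ : RepIsSimple σ)
    {T : V →ₗ[k] W} (hT : ∀ g v, T (ρ g v) = σ g (T v)) (h0 : T ≠ 0) : Function.Bijective T :=
  have := hρ.isIrreducible
  have := hσ.isIrreducible
  (Representation.IsIrreducible.bijective_or_eq_zero
    (T.intertwiningMap_of_isIntertwiningMap ρ σ hT)).resolve_right
    fun h => h0 (congrArg Representation.IntertwiningMap.toLinearMap h)

lemma RepIsSimple.exists_eq_smul_id [IsAlgClosed k] [FiniteDimensional k V]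
    (hρ : RepIsSimple ρ) {A : Module.End k V} (hA : ∀ g v, A (ρ g v) = ρ g (A v)) :
    ∃ μ : k, A = μ • LinearMap.id := by
  have := hρ.isIrreducible
  obtain ⟨μ, hμ⟩ :=
    Representation.IsIrreducible.algebraMap_intertwiningMap_bijective_of_isAlgClosed.2
      (A.intertwiningMap_of_isIntertwiningMap ρ ρ hA)
  exact ⟨μ, congrArg Representation.IntertwiningMap.toLinearMap hμ.symm⟩

lemma IsRepIso.symm (h : IsRepIso ρ σ) : IsRepIso σ ρ := by
  obtain ⟨e, he⟩ := h
  exact ⟨e.symm, fun g w => by rw [e.symm_apply_eq, he, e.apply_symm_apply]⟩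

lemma RepIsSimple.of_isRepIso (h : IsRepIso ρ σ) (hρ : RepIsSimple ρ) : RepIsSimple σ := by
  obtain ⟨e, he⟩ := h
  have := hρ.1
  refine ⟨e.symm.toEquiv.nontrivial, fun p hp => ?_⟩
  have hmap : p = (p.comap (e : V →ₗ[k] W)).map (e : V →ₗ[k] W) :=
    (Submodule.map_comap_eq_of_surjective e.surjective p).symm
  rcases hρ.2 (p.comap (e : V →ₗ[k] W)) (fun g v hv => by simpa [he] using hp g _ hv) with h | h
  · exact .inl (by rw [hmap, h, Submodule.map_bot])
  · exact .inr (by rw [hmap, h, Submodule.map_top, LinearEquiv.range])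

end SimpleRep

section Restriction

variable {K L P : Subgroup G} {V W U : Type u} [AddCommGroup V] [Module k V] [AddCommGroup W]
  [Module k W] [AddCommGroup U] [Module k U]
  {ρ : Representation k K V} {σ : Representation k L W} {τ : Representation k P U}

lemma IsConjInv.of_isRepIso {ρ' : Representation k K W} (h : IsRepIso ρ ρ') {g : G}
    (hg : IsConjInv K ρ g) : IsConjInv K ρ' g := by
  obtain ⟨e, he⟩ := h
  obtain ⟨c, hc⟩ := hg
  refine ⟨(e.symm.trans c).trans e, fun x hx hx' w => ?_⟩
  have hsymm := he ⟨x, hx⟩ (e.symm w)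
  rw [e.apply_symm_apply, ← e.eq_symm_apply] at hsymm
  simp only [LinearEquiv.trans_apply, ← hsymm, hc x hx hx', he]

lemma IsRepIso.restrictIsoDep {ρ' : Representation k K W} (h : IsRepIso ρ ρ') :
    RestrictIsoDep K K ρ ρ' :=
  let ⟨e, he⟩ := h
  ⟨e, fun x hK _ v => he ⟨x, hK⟩ v⟩

lemma restrictIsoDep_iff_isRepIso (hKL : K ≤ L) :
    RestrictIsoDep K L ρ σ ↔ IsRepIso ρ (σ.comp (Subgroup.inclusion hKL)) :=
  ⟨fun ⟨e, he⟩ => ⟨e, fun x v => he x x.2 (hKL x.2) v⟩,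
    fun ⟨e, he⟩ => ⟨e, fun x hK _ v => he ⟨x, hK⟩ v⟩⟩

lemma RestrictIsoDep.symm (h : RestrictIsoDep K L ρ σ) : RestrictIsoDep L K σ ρ := by
  obtain ⟨e, he⟩ := h
  exact ⟨e.symm, fun x hL hK w => by rw [e.symm_apply_eq, he x hK hL, e.apply_symm_apply]⟩

lemma RestrictIsoDep.trans (hKPL : ∀ x ∈ K, x ∈ P → x ∈ L) (h₁ : RestrictIsoDep K L ρ σ)
    (h₂ : RestrictIsoDep L P σ τ) : RestrictIsoDep K P ρ τ := by
  obtain ⟨e₁, he₁⟩ := h₁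
  obtain ⟨e₂, he₂⟩ := h₂
  exact ⟨e₁.trans e₂, fun x hK hP v => by
    rw [LinearEquiv.trans_apply, LinearEquiv.trans_apply, he₁ x hK (hKPL x hK hP), he₂]⟩

lemma restrictIsoDep_of_eq {ρL : Representation k L V}
    (h : ∀ x (hK : x ∈ K) (hL : x ∈ L), ρL ⟨x, hL⟩ = ρ ⟨x, hK⟩) : RestrictIsoDep K L ρ ρL :=
  ⟨LinearEquiv.refl k V, fun x hK hL v => by simp [h x hK hL]⟩

lemma RestrictIsoDep.exists_eq (h : RestrictIsoDep K L ρ σ) :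
    ∃ ρL : Representation k L V, ∀ x (hK : x ∈ K) (hL : x ∈ L), ρL ⟨x, hL⟩ = ρ ⟨x, hK⟩ := by
  obtain ⟨e, he⟩ := h
  refine ⟨e.symm.conjRingEquiv.toMonoidHom.comp σ, fun x hK hL => LinearMap.ext fun v => ?_⟩
  simp [← he x hK hL]

lemma repExtendsDep_iff_exists_eq : RepExtendsDep K L ρ ↔
    ∃ ρL : Representation k L V, ∀ x (hK : x ∈ K) (hL : x ∈ L), ρL ⟨x, hL⟩ = ρ ⟨x, hK⟩ :=
  ⟨fun ⟨_, h⟩ => RestrictIsoDep.exists_eq h, fun ⟨ρL, h⟩ => ⟨ρL, restrictIsoDep_of_eq h⟩⟩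

lemma RestrictIsoDep.repExtendsDep (h : RestrictIsoDep K L ρ σ) : RepExtendsDep K L ρ :=
  repExtendsDep_iff_exists_eq.2 h.exists_eq

lemma RepExtendsDep.of_isRepIso {ρ' : Representation k K W} (h : IsRepIso ρ ρ')
    (hρ : RepExtendsDep K L ρ) : RepExtendsDep K L ρ' := by
  obtain ⟨ρL, hρL⟩ := hρ
  exact (h.symm.restrictIsoDep.trans (fun _ hx _ => hx) hρL).repExtendsDep

end Restriction

section ConjIntertwining

variable {K : Subgroup G} {V W : Type u} [AddCommGroup V] [Module k V] [AddCommGroup W]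
  [Module k W] {ρ : Representation k K V} {σ : Representation k K W} {g : G}

def IsConjIntertwining (K : Subgroup G) (ρ : Representation k K V) (σ : Representation k K W)
    (g : G) (A : V →ₗ[k] W) : Prop :=
  ∀ (x : G) (hx : x ∈ K) (hx' : g * x * g⁻¹ ∈ K) (v : V),
    A (ρ ⟨x, hx⟩ v) = σ ⟨g * x * g⁻¹, hx'⟩ (A v)

lemma isConjInv_iff_exists_isConjIntertwining {ρ : Representation k K V} :
    IsConjInv K ρ g ↔ ∃ e : V ≃ₗ[k] V, IsConjIntertwining K ρ ρ g e :=
  Iff.rfl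

lemma IsConjIntertwining.symm {e : V ≃ₗ[k] W} (he : IsConjIntertwining K ρ σ g e) :
    IsConjIntertwining K σ ρ g⁻¹ e.symm := by
  intro x hx hx' w
  have hgx : g * (g⁻¹ * x * g⁻¹⁻¹) * g⁻¹ ∈ K := by simpa [mul_assoc] using hx
  have h := he _ hx' hgx (e.symm w)
  simp only [LinearEquiv.coe_coe, e.apply_symm_apply] at h ⊢
  rw [σ.subgroup_apply_congr hgx hx (by group)] at h
  rw [← h, e.symm_apply_apply]

lemma IsConjIntertwining.smul {A : V →ₗ[k] W} (hA : IsConjIntertwining K ρ σ g A) (μ : k) :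
    IsConjIntertwining K ρ σ g (μ • A) := by
  intro x hx hx' v
  simp only [LinearMap.smul_apply, hA x hx hx', map_smul]

lemma isConjIntertwining_of_restrict_eq {L : Subgroup G} (hKL : K ≤ L)
    {τ : Representation k L V} (hτ : ∀ x (hK : x ∈ K), τ ⟨x, hKL hK⟩ = ρ ⟨x, hK⟩) (l : L) :
    IsConjIntertwining K ρ ρ l (τ l) := by
  intro x hx hx' v
  rw [← hτ x hx, ← hτ _ hx', ← Module.End.mul_apply, ← Module.End.mul_apply, ← map_mul,
    ← map_mul]
  congr 2
  ext
  simp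

lemma isConjInv_of_mem (hg : g ∈ K) : IsConjInv K ρ g :=
  ⟨LinearEquiv.ofBijective _ (ρ.apply_bijective ⟨g, hg⟩),
    isConjIntertwining_of_restrict_eq le_rfl (fun _ _ => rfl) ⟨g, hg⟩⟩

/-- The conjugate representation `x ↦ σ (g * x * g⁻¹)`. -/
def conjRep (σ : Representation k K W) (hg : g ∈ Subgroup.normalizer K) :
    Representation k K W :=
  σ.comp (Subgroup.normalizerMonoidHom K ⟨g, hg⟩).toMonoidHom

lemma RepIsSimple.conjRep (hσ : RepIsSimple σ) (hg : g ∈ Subgroup.normalizer K) :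
    RepIsSimple (conjRep σ hg) := by
  refine ⟨hσ.1, fun p hp => hσ.2 p fun y v hv => ?_⟩
  have hy : g⁻¹ * y * g ∈ K := (Subgroup.mem_normalizer_iff''.mp hg y).mp y.2
  convert hp ⟨_, hy⟩ v hv using 2
  show σ y = σ ⟨g * (g⁻¹ * y * g) * g⁻¹, _⟩
  congr 1
  ext
  simp [mul_assoc]

lemma IsConjIntertwining.bijective (hρ : RepIsSimple ρ) (hσ : RepIsSimple σ)
    (hg : g ∈ Subgroup.normalizer K) {A : V →ₗ[k] W} (hA : IsConjIntertwining K ρ σ g A)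
    (h0 : A ≠ 0) : Function.Bijective A :=
  hρ.bijective_of_ne_zero (hσ.conjRep hg) (fun x v => hA x x.2 _ v) h0

lemma IsConjIntertwining.of_comp_inclusion [IsAlgClosed k] [FiniteDimensional k V]
    {K' : Subgroup G} (hK : K' ≤ K) (hρ : RepIsSimple (ρ.comp (Subgroup.inclusion hK)))
    (hg : g ∈ Subgroup.normalizer K') (hgρ : IsConjInv K ρ g) {A : V →ₗ[k] V}
    (hA : IsConjIntertwining K' (ρ.comp (Subgroup.inclusion hK))
      (ρ.comp (Subgroup.inclusion hK)) g A) :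
    IsConjIntertwining K ρ ρ g A := by
  obtain ⟨c, hc⟩ := isConjInv_iff_exists_isConjIntertwining.1 hgρ
  -- By Schur's lemma `c⁻¹ ∘ A`, which commutes with `ρ` on `K'`, is a scalar.
  have hD : ∀ (m : K') (v : V), (c.symm.toLinearMap ∘ₗ A) (ρ.comp (Subgroup.inclusion hK) m v)
      = ρ.comp (Subgroup.inclusion hK) m ((c.symm.toLinearMap ∘ₗ A) v) := by
    intro m v
    have hm : g * m * g⁻¹ ∈ K' := (Subgroup.mem_normalizer_iff.mp hg m).mp m.2
    have hm' : g⁻¹ * (g * m * g⁻¹) * g⁻¹⁻¹ ∈ K := by simpa [mul_assoc] using hK m.2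
    have h1 : A (ρ ⟨m, hK m.2⟩ v) = ρ ⟨g * m * g⁻¹, hK hm⟩ (A v) := hA m m.2 hm v
    have h2 := hc.symm _ (hK hm) hm' (A v)
    simp only [LinearEquiv.coe_coe] at h2
    show c.symm (A (ρ ⟨m, hK m.2⟩ v)) = ρ ⟨m, hK m.2⟩ (c.symm (A v))
    rw [h1, h2, ρ.subgroup_apply_congr hm' (hK m.2) (by group)]
  obtain ⟨μ, hμ⟩ := hρ.exists_eq_smul_id hD
  have hAc : A = μ • c.toLinearMap := by
    ext v
    have := LinearMap.congr_fun hμ v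
    simp only [LinearMap.comp_apply, LinearMap.smul_apply, LinearMap.id_apply,
      LinearEquiv.coe_coe] at this
    rw [LinearMap.smul_apply, LinearEquiv.coe_coe, ← map_smul, ← this, c.apply_symm_apply]
  rw [hAc]
  exact hc.smul μ

end ConjIntertwining

section Induced

variable {K L : Subgroup G} (hKL : K ≤ L) {V : Type u} [AddCommGroup V] [Module k V]
  (φ : Representation k K V)

local notation "Ind" => indCarrier (Subgroup.inclusion hKL) φ

lemma indRep_apply_apply (g x : L) (f : Ind) :
    (indRep (Subgroup.inclusion hKL) φ g f).1 x = f.1 (x * g) := rfl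

open Classical in
/-- The embedding `v ↦ 1 ⊗ v` of `V` into the induced module. -/
def indSingle : V →ₗ[k] Ind where
  toFun v := ⟨fun x => if hx : (x : G) ∈ K then φ ⟨x, hx⟩ v else 0, by
    intro h x
    beta_reduce
    by_cases hx : (x : G) ∈ K
    · have hhx : ((Subgroup.inclusion hKL h * x : L) : G) ∈ K := K.mul_mem h.2 hx
      rw [dif_pos hx, dif_pos hhx, ← Module.End.mul_apply, ← map_mul]
      rfl
    · have hhx : ((Subgroup.inclusion hKL h * x : L) : G) ∉ K := fun hhx =>
        hx (by simpa using K.mul_mem (K.inv_mem h.2) hhx)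
      rw [dif_neg hx, dif_neg hhx, map_zero]⟩
  map_add' v w := by
    ext x
    by_cases hx : (x : G) ∈ K <;> simp [hx]
  map_smul' c v := by
    ext x
    by_cases hx : (x : G) ∈ K <;> simp [hx]

variable {hKL φ}

lemma indSingle_apply_of_mem (v : V) {x : L} (hx : (x : G) ∈ K) :
    (indSingle hKL φ v).1 x = φ ⟨x, hx⟩ v := dif_pos hx

lemma indSingle_apply_of_notMem (v : V) {x : L} (hx : (x : G) ∉ K) :
    (indSingle hKL φ v).1 x = 0 := dif_neg hx

lemma indSingle_apply_one (v : V) : (indSingle hKL φ v).1 1 = v := by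
  rw [indSingle_apply_of_mem v K.one_mem]
  exact LinearMap.congr_fun (map_one φ) v

lemma indSingle_map (n : K) (v : V) :
    indSingle hKL φ (φ n v) =
      indRep (Subgroup.inclusion hKL) φ (Subgroup.inclusion hKL n) (indSingle hKL φ v) := by
  ext x
  rw [indRep_apply_apply]
  by_cases hx : (x : G) ∈ K
  · rw [indSingle_apply_of_mem _ hx, indSingle_apply_of_mem _ (K.mul_mem hx n.2),
      ← Module.End.mul_apply, ← map_mul]
    rfl
  · rw [indSingle_apply_of_notMem _ hx, indSingle_apply_of_notMem]
    exact fun hxn => hx (by simpa using K.mul_mem hxn (K.inv_mem n.2))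

lemma mem_range_indSingle {f : Ind} (hf : ∀ x : L, (x : G) ∉ K → f.1 x = 0) :
    f ∈ LinearMap.range (indSingle hKL φ) := by
  refine ⟨f.1 1, Subtype.ext (funext fun x => ?_)⟩
  by_cases hx : (x : G) ∈ K
  · rw [indSingle_apply_of_mem _ hx, ← f.2 ⟨x, hx⟩ 1, mul_one]
    rfl
  · rw [indSingle_apply_of_notMem _ hx, hf x hx]

lemma indSingle_apply_one_of_mem_range {f : Ind} (hf : f ∈ LinearMap.range (indSingle hKL φ)) :
    indSingle hKL φ (f.1 1) = f := by
  obtain ⟨v, rfl⟩ := hf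
  rw [indSingle_apply_one]

variable (hKL φ) in
/-- `A` cut down to the functions supported on `K`, which `indSingle` identifies with `V`;
meaningful when `A` preserves them. -/
def indCompress (A : Module.End k Ind) : Module.End k V :=
  (LinearMap.proj 1 ∘ₗ (Ind).subtype) ∘ₗ A ∘ₗ indSingle hKL φ

lemma indCompress_apply (A : Module.End k Ind) (v : V) :
    indCompress hKL φ A v = (A (indSingle hKL φ v)).1 1 := rfl

lemma indSingle_indCompress {A : Module.End k Ind}
    (hA : ∀ v, A (indSingle hKL φ v) ∈ LinearMap.range (indSingle hKL φ))
    (v : V) : indSingle hKL φ (indCompress hKL φ A v) = A (indSingle hKL φ v) :=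
  indSingle_apply_one_of_mem_range (hA v)

lemma indCompress_one : indCompress hKL φ 1 = 1 :=
  LinearMap.ext fun v => indSingle_apply_one (hKL := hKL) v

lemma indCompress_mul {A B : Module.End k Ind}
    (hB : ∀ v, B (indSingle hKL φ v) ∈ LinearMap.range (indSingle hKL φ)) :
    indCompress hKL φ (A * B) = indCompress hKL φ A * indCompress hKL φ B := by
  ext v
  simp only [Module.End.mul_apply, indCompress_apply]
  rw [indSingle_apply_one_of_mem_range (hB v)]

lemma indCompress_indRep {x : G} (hx : x ∈ K) :
    indCompress hKL φ (indRep (Subgroup.inclusion hKL) φ ⟨x, hKL hx⟩) = φ ⟨x, hx⟩ := by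
  ext v
  rw [indCompress_apply, indRep_apply_apply, one_mul, indSingle_apply_of_mem v hx]

lemma indCompress_injective {A : Module.End k Ind}
    (hA : ∀ v, A (indSingle hKL φ v) ∈ LinearMap.range (indSingle hKL φ))
    (hinj : Function.Injective A) : Function.Injective (indCompress hKL φ A) := by
  intro v w h
  have := congrArg (indSingle hKL φ) h
  rw [indSingle_indCompress hA, indSingle_indCompress hA] at this
  simpa only [indSingle_apply_one] using congrArg (fun f => f.1 1) (hinj this)

lemma IsConjIntertwining.indCompress {A : Module.End k Ind} {g : G}
    (hA : IsConjIntertwining L (indRep (Subgroup.inclusion hKL) φ)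
      (indRep (Subgroup.inclusion hKL) φ) g A)
    (hAK : ∀ v, A (indSingle hKL φ v) ∈ LinearMap.range (indSingle hKL φ)) :
    IsConjIntertwining K φ φ g (indCompress hKL φ A) := by
  intro x hx hx' v
  have h : indSingle hKL φ (φ ⟨x, hx⟩ v) =
      indRep (Subgroup.inclusion hKL) φ ⟨x, hKL hx⟩ (indSingle hKL φ v) :=
    indSingle_map ⟨x, hx⟩ v
  rw [indCompress_apply, h, hA x (hKL hx) (hKL hx'), indRep_apply_apply, one_mul,
    ← indSingle_indCompress hAK]
  exact indSingle_apply_of_mem _ hx'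

variable (hKL φ) in
def indCompressRep {Γ : Type u} [Group Γ] (σ : Representation k Γ Ind)
    (hσ : ∀ γ v, σ γ (indSingle hKL φ v) ∈ LinearMap.range (indSingle hKL φ)) :
    Representation k Γ V where
  toFun γ := indCompress hKL φ (σ γ)
  map_one' := by rw [map_one, indCompress_one]
  map_mul' γ δ := by rw [map_mul, indCompress_mul (hσ δ)]

lemma indCompressRep_apply {Γ : Type u} [Group Γ] (σ : Representation k Γ Ind)
    (hσ : ∀ γ v, σ γ (indSingle hKL φ v) ∈ LinearMap.range (indSingle hKL φ)) (γ : Γ) :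
    indCompressRep hKL φ σ hσ γ = indCompress hKL φ (σ γ) := rfl

section Conj

variable {g : G} (hgL : g ∈ Subgroup.normalizer L) (hgK : g ∈ Subgroup.normalizer K)
  {e : V →ₗ[k] V} (he : IsConjIntertwining K φ φ g e)

def indConj : Module.End k Ind where
  toFun f := ⟨fun x => e (f.1 ⟨g⁻¹ * x * g, (Subgroup.mem_normalizer_iff''.mp hgL x).mp x.2⟩), by
    intro h x
    have hh : g⁻¹ * h * g ∈ K := (Subgroup.mem_normalizer_iff''.mp hgK h).mp h.2
    have hgh : g * (g⁻¹ * h * g) * g⁻¹ ∈ K := by simp [mul_assoc]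
    have hsplit : (⟨g⁻¹ * ((Subgroup.inclusion hKL h * x : L) : G) * g,
        (Subgroup.mem_normalizer_iff''.mp hgL _).mp (Subgroup.inclusion hKL h * x).2⟩ : L) =
        Subgroup.inclusion hKL ⟨g⁻¹ * h * g, hh⟩ *
          ⟨g⁻¹ * x * g, (Subgroup.mem_normalizer_iff''.mp hgL x).mp x.2⟩ :=
      Subtype.ext (by simp [mul_assoc])
    simp only
    rw [hsplit, f.2, he _ hh hgh, φ.subgroup_apply_congr hgh h.2 (by group)]⟩
  map_add' f f' := by
    ext x
    simp
  map_smul' c f := by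
    ext x
    simp

lemma indConj_apply (f : Ind) (x : L) :
    (indConj hgL hgK he f).1 x =
      e (f.1 ⟨g⁻¹ * x * g, (Subgroup.mem_normalizer_iff''.mp hgL x).mp x.2⟩) := rfl

lemma isConjIntertwining_indConj :
    IsConjIntertwining L (indRep (Subgroup.inclusion hKL) φ) (indRep (Subgroup.inclusion hKL) φ)
      g (indConj hgL hgK he) := by
  intro n hn hn' f
  ext x
  simp only [indConj_apply, indRep_apply_apply]
  exact congrArg (fun y => e (f.1 y)) (Subtype.ext (by simp [mul_assoc]))

end Conj

lemma IsConjInv.indRep {g : G} (hgL : g ∈ Subgroup.normalizer L)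
    (hgK : g ∈ Subgroup.normalizer K) (h : IsConjInv K φ g) :
    IsConjInv L (indRep (Subgroup.inclusion hKL) φ) g := by
  obtain ⟨e, he⟩ := isConjInv_iff_exists_isConjIntertwining.1 h
  have he' : IsConjIntertwining K φ φ g⁻¹ e.symm := he.symm
  refine ⟨LinearEquiv.ofLinearMap (indConj hgL hgK he)
    (indConj (inv_mem hgL) (inv_mem hgK) he') ?_ ?_, ?_⟩
  · ext f x
    simp only [LinearMap.comp_apply, indConj_apply, LinearEquiv.coe_coe, LinearMap.id_apply,
      e.apply_symm_apply]
    exact congrArg f.1 (Subtype.ext (by simp [mul_assoc]))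
  · ext f x
    simp only [LinearMap.comp_apply, indConj_apply, LinearEquiv.coe_coe, LinearMap.id_apply,
      e.symm_apply_apply]
    exact congrArg f.1 (Subtype.ext (by simp [mul_assoc]))
  · exact isConjIntertwining_indConj hgL hgK he

end Induced

section Inertia

variable {K : Subgroup G} {V : Type u} [AddCommGroup V] [Module k V]

def inertia (K : Subgroup G) (ρ : Representation k K V) : Subgroup G :=
  stabilizerIn (Subgroup.normalizer K) K
    (fun _ hg x hx => (Subgroup.mem_normalizer_iff.mp hg x).mp hx) ρ

lemma le_stabilizerIn_of_le {X : Subgroup G} (hX : ∀ g ∈ X, ∀ x ∈ K, g * x * g⁻¹ ∈ K)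
    (hKX : K ≤ X) (ρ : Representation k K V) : K ≤ stabilizerIn X K hX ρ :=
  fun _ hx => ⟨hKX hx, isConjInv_of_mem hx⟩

lemma stabilizerIn_le_inertia {X : Subgroup G} (hX : ∀ g ∈ X, ∀ x ∈ K, g * x * g⁻¹ ∈ K)
    (ρ : Representation k K V) : stabilizerIn X K hX ρ ≤ inertia K ρ :=
  fun _ hg => ⟨le_normalizer_of_conj_mem hX hg.1, hg.2⟩

lemma stabilizerIn_mono {X Y : Subgroup G} (hX : ∀ g ∈ X, ∀ x ∈ K, g * x * g⁻¹ ∈ K)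
    (hY : ∀ g ∈ Y, ∀ x ∈ K, g * x * g⁻¹ ∈ K) (hXY : X ≤ Y) (ρ : Representation k K V) :
    stabilizerIn X K hX ρ ≤ stabilizerIn Y K hY ρ :=
  fun _ hg => ⟨hXY hg.1, hg.2⟩

lemma inertia_inf_normalizer_le {N : Subgroup G} (hKN : ∀ g ∈ N, ∀ x ∈ K, g * x * g⁻¹ ∈ K)
    (ρ : Representation k K V) :
    inertia K ρ ⊓ Subgroup.normalizer N ≤ Subgroup.normalizer (stabilizerIn N K hKN ρ) :=
  le_normalizer_of_conj_mem fun _ hg n hn =>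
    ⟨(Subgroup.mem_normalizer_iff.mp hg.2 n).mp hn.1, ((inertia K ρ).mul_mem
      ((inertia K ρ).mul_mem hg.1 (stabilizerIn_le_inertia hKN ρ hn))
      ((inertia K ρ).inv_mem hg.1)).2⟩

end Inertia

section Clifford

variable {M N : Subgroup G} (hMN : ∀ g ∈ N, ∀ x ∈ M, g * x * g⁻¹ ∈ M) (hMle : M ≤ N)
  {Vξ Vφ : Type u} [AddCommGroup Vξ] [Module k Vξ] [AddCommGroup Vφ] [Module k Vφ]
  {ξ : Representation k M Vξ} {φ : Representation k (stabilizerIn N M hMN ξ) Vφ}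

local notation "Nξ" => stabilizerIn N M hMN ξ
local notation "ιξ" => Subgroup.inclusion (stabilizerIn_le N M hMN ξ)
local notation "ρInd" => indRep (Subgroup.inclusion (stabilizerIn_le N M hMN ξ)) φ
local notation "single" => indSingle (stabilizerIn_le N M hMN ξ) φ

include hMle in
/-- Evaluating `A ∘ single` at `x ∉ N_ξ` gives an intertwiner from `ξ` to its `x c`-conjugate,
which vanishes by Schur's lemma since `ξ^c ≅ ξ` but `ξ^x ≇ ξ`. -/
lemma mem_range_indSingle_of_isConjIntertwining (hξ : RepIsSimple ξ)
    (hres : RestrictIsoDep M Nξ ξ φ) {c : G} (hc : c ∈ inertia M ξ)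
    {A : Module.End k (indCarrier ιξ φ)} (hA : IsConjIntertwining N ρInd ρInd c A) (v : Vφ) :
    A (single v) ∈ LinearMap.range single := by
  have hMNξ : M ≤ Nξ := le_stabilizerIn_of_le hMN hMle ξ
  have hφM : RepIsSimple (φ.comp (Subgroup.inclusion hMNξ)) :=
    hξ.of_isRepIso ((restrictIsoDep_iff_isRepIso hMNξ).1 hres)
  refine mem_range_indSingle fun x hx => ?_
  let T : Module.End k Vφ := (LinearMap.proj x ∘ₗ (indCarrier ιξ φ).subtype) ∘ₗ A ∘ₗ single
  have hT : IsConjIntertwining M (φ.comp (Subgroup.inclusion hMNξ))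
      (φ.comp (Subgroup.inclusion hMNξ)) (x * c) T := by
    intro m hm hm' w
    have hcm : c * m * c⁻¹ ∈ M := (Subgroup.mem_normalizer_iff.mp hc.1 m).mp hm
    have h1 : single (φ ⟨m, hMNξ hm⟩ w) = ρInd ⟨m, hMle hm⟩ (single w) :=
      indSingle_map ⟨m, hMNξ hm⟩ w
    have h2 : x * ⟨c * m * c⁻¹, hMle hcm⟩ = ιξ ⟨x * c * m * (x * c)⁻¹, hMNξ hm'⟩ * x :=
      Subtype.ext (by simp [mul_assoc])
    show (A (single (φ ⟨m, hMNξ hm⟩ w))).1 x = φ ⟨_, hMNξ hm'⟩ ((A (single w)).1 x)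
    rw [h1, hA m (hMle hm) (hMle hcm), indRep_apply_apply, h2, (A (single w)).2]
  have hT0 : T = 0 := by
    by_contra h0
    have hxc : IsConjInv M ξ (x * c) :=
      IsConjInv.of_isRepIso ((restrictIsoDep_iff_isRepIso hMNξ).1 hres).symm
        ⟨LinearEquiv.ofBijective T (hT.bijective hφM hφM
          (mul_mem (le_normalizer_of_conj_mem hMN x.2) hc.1) h0), hT⟩
    have hx' : (x : G) ∈ inertia M ξ := by
      simpa using (inertia M ξ).mul_mem
        ⟨mul_mem (le_normalizer_of_conj_mem hMN x.2) hc.1, hxc⟩ ((inertia M ξ).inv_mem hc)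
    exact hx ⟨x.2, hx'.2⟩
  exact LinearMap.congr_fun hT0 v

include hMle in
lemma IsConjInv.of_indRep [FiniteDimensional k Vφ] (hξ : RepIsSimple ξ)
    (hres : RestrictIsoDep M Nξ ξ φ) {g : G} (hg : g ∈ inertia M ξ)
    (hgInd : IsConjInv N ρInd g) : IsConjInv Nξ φ g := by
  obtain ⟨E, hE⟩ := isConjInv_iff_exists_isConjIntertwining.1 hgInd
  have hEK := mem_range_indSingle_of_isConjIntertwining hMN hMle hξ hres hg hE
  exact ⟨LinearEquiv.ofInjectiveEndo _ (indCompress_injective hEK E.injective),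
    hE.indCompress hEK⟩

end Clifford

section Mackey

variable {K N L X : Subgroup G} (hKN : K ≤ N) (hLX : L ≤ X) (hNX : N ≤ X) {hKL : K ≤ L}
  {V : Type u} [AddCommGroup V] [Module k V] {φ : Representation k K V}
  {σ : Representation k L V} (hσ : ∀ x (hK : x ∈ K), σ ⟨x, hKL hK⟩ = φ ⟨x, hK⟩)

def indRestrict :
    indCarrier (Subgroup.inclusion hLX) σ →ₗ[k] indCarrier (Subgroup.inclusion hKN) φ where
  toFun F := ⟨fun n => F.1 (Subgroup.inclusion hNX n), fun h x => by
    have := F.2 ⟨h, hKL h.2⟩ (Subgroup.inclusion hNX x)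
    rw [hσ] at this
    exact this⟩
  map_add' _ _ := rfl
  map_smul' _ _ := rfl

lemma indRestrict_apply (F : indCarrier (Subgroup.inclusion hLX) σ) (n : N) :
    (indRestrict hKN hLX hNX hσ F).1 n = F.1 (Subgroup.inclusion hNX n) := rfl

variable {hKN} in
include hσ in
lemma apply_ind_eq_of_mul_eq (hLN : ∀ x ∈ L, x ∈ N → x ∈ K)
    (f : indCarrier (Subgroup.inclusion hKN) φ) {l l' : L} {n n' : N}
    (h : (l : G) * n = l' * n') : σ l (f.1 n) = σ l' (f.1 n') := by
  have hu : (l' : G)⁻¹ * l = n' * (n : G)⁻¹ := by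
    rw [inv_mul_eq_iff_eq_mul, ← mul_assoc, ← h, mul_inv_cancel_right]
  have huK : (l' : G)⁻¹ * l ∈ K :=
    hLN _ (L.mul_mem (L.inv_mem l'.2) l.2) (hu ▸ N.mul_mem n'.2 (N.inv_mem n.2))
  have hn' : n' = Subgroup.inclusion hKN ⟨_, huK⟩ * n := Subtype.ext (by simp [hu])
  rw [hn', f.2, ← hσ, ← Module.End.mul_apply, ← map_mul]
  congr
  ext
  simp

variable (hX : (X : Set G) ⊆ (L : Set G) * N)

include hX in
lemma indRestrict_injective : Function.Injective (indRestrict hKN hLX hNX hσ) := by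
  refine (injective_iff_map_eq_zero _).2 fun F hF => Subtype.ext (funext fun y => ?_)
  obtain ⟨l, hl, n, hn, hy⟩ := hX y.2
  have hy' : y = Subgroup.inclusion hLX ⟨l, hl⟩ * Subgroup.inclusion hNX ⟨n, hn⟩ :=
    Subtype.ext hy.symm
  rw [hy', F.2, ← indRestrict_apply hKN hLX hNX hσ, hF]
  simp

include hX in
lemma indRestrict_surjective (hLN : ∀ x ∈ L, x ∈ N → x ∈ K) :
    Function.Surjective (indRestrict hKN hLX hNX hσ) := by
  intro f
  choose l hl n hn hln using fun y : X => hX y.2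
  refine ⟨⟨fun y => σ ⟨l y, hl y⟩ (f.1 ⟨n y, hn y⟩), by
    intro l₀ y
    beta_reduce
    rw [← Module.End.mul_apply, ← map_mul]
    exact apply_ind_eq_of_mul_eq hσ hLN f (by simp [hln, mul_assoc])⟩, ?_⟩
  refine Subtype.ext (funext fun x => ?_)
  show σ _ (f.1 _) = f.1 x
  rw [apply_ind_eq_of_mul_eq hσ hLN f (l' := 1) (n' := x) (by simp [hln]), map_one,
    Module.End.one_apply]

include hNX hσ hX in
/-- Mackey's formula, for `X = L N` a single `(L, N)`-double coset. -/
lemma restrictIsoDep_indRep (hLN : ∀ x ∈ L, x ∈ N → x ∈ K) :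
    RestrictIsoDep N X (indRep (Subgroup.inclusion hKN) φ)
      (indRep (Subgroup.inclusion hLX) σ) := by
  let e := LinearEquiv.ofBijective (indRestrict hKN hLX hNX hσ)
    ⟨indRestrict_injective hKN hLX hNX hσ hX, indRestrict_surjective hKN hLX hNX hσ hX hLN⟩
  refine ⟨e.symm, fun x hN hX' f => ?_⟩
  rw [e.symm_apply_eq]
  refine Subtype.ext (funext fun n => ?_)
  conv_lhs => rw [← e.apply_symm_apply f]
  rfl

end Mackey

section Glue

variable {A B : Subgroup G} {V : Type u} [AddCommGroup V] [Module k V]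
  {τ : Representation k A V} {φ : Representation k B V}
  (hagree : ∀ x (hA : x ∈ A) (hB : x ∈ B), τ ⟨x, hA⟩ = φ ⟨x, hB⟩)
  (htwist : ∀ a : A, IsConjIntertwining B φ φ a (τ a))

include hagree in
lemma map_mul_map_eq_of_mul_eq {a a' : A} {b b' : B} (h : (a : G) * b = a' * b') :
    τ a * φ b = τ a' * φ b' := by
  have hu : (a' : G)⁻¹ * a = b' * (b : G)⁻¹ := by
    rw [inv_mul_eq_iff_eq_mul, ← mul_assoc, ← h, mul_inv_cancel_right]
  have huA : (a' : G)⁻¹ * a ∈ A := A.mul_mem (A.inv_mem a'.2) a.2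
  have huB : (a' : G)⁻¹ * a ∈ B := hu ▸ B.mul_mem b'.2 (B.inv_mem b.2)
  have ha : a = a' * ⟨_, huA⟩ := Subtype.ext (by simp)
  have hb' : b' = ⟨_, huB⟩ * b := Subtype.ext (by simp [hu])
  rw [ha, hb', map_mul, map_mul, hagree _ huA huB, mul_assoc]

include htwist in
lemma map_mul_map_mul_map_mul_map {a a' : A} {b b' : B} (hb : (a' : G)⁻¹ * b * a' ∈ B) :
    τ a * φ b * (τ a' * φ b') = τ (a * a') * φ (⟨_, hb⟩ * b') := by
  have key : τ a' * φ ⟨_, hb⟩ = φ b * τ a' := LinearMap.ext fun v => by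
    rw [Module.End.mul_apply, htwist a' _ hb (by simp [mul_assoc]) v,
      φ.subgroup_apply_congr _ b.2 (by group)]
    rfl
  calc τ a * φ b * (τ a' * φ b') = τ a * (φ b * τ a') * φ b' := by simp only [mul_assoc]
    _ = τ (a * a') * φ (⟨_, hb⟩ * b') := by rw [← key, map_mul, map_mul]; simp only [mul_assoc]

include hagree htwist in
lemma exists_rep_sup (hAB : A ≤ Subgroup.normalizer B) :
    ∃ σ : Representation k ↥(A ⊔ B) V,
      ∀ x (hB : x ∈ B) (hx : x ∈ A ⊔ B), σ ⟨x, hx⟩ = φ ⟨x, hB⟩ := by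
  have hmem : ∀ y : ↥(A ⊔ B), (y : G) ∈ (A : Set G) * B := fun y => by
    rw [← Subgroup.coe_mul_of_left_le_normalizer_right A B hAB]
    exact y.2
  choose a ha b hb hab using hmem
  simp only at hab
  -- `σ (a * b) := τ a * φ b`, well defined since `τ` and `φ` agree on `A ⊓ B`.
  refine ⟨{ toFun := fun y => τ ⟨a y, ha y⟩ * φ ⟨b y, hb y⟩, map_one' := ?_, map_mul' := ?_ },
    ?_⟩
  · rw [map_mul_map_eq_of_mul_eq hagree (a' := 1) (b' := 1) (by simp [hab]), map_one, map_one,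
      one_mul]
  · intro y z
    have hbz : (a z)⁻¹ * b y * a z ∈ B :=
      (Subgroup.mem_normalizer_iff''.mp (hAB (ha z)) _).mp (hb y)
    rw [map_mul_map_mul_map_mul_map htwist hbz]
    refine map_mul_map_eq_of_mul_eq hagree ?_
    show a (y * z) * b (y * z) = a y * a z * ((a z)⁻¹ * b y * a z * b z)
    rw [hab, Subgroup.coe_mul, ← hab y, ← hab z]
    group
  · intro x hB hx
    have h : a ⟨x, hx⟩ * b ⟨x, hx⟩ = (1 : G) * x := by rw [hab, one_mul]
    show τ _ * φ _ = _
    rw [map_mul_map_eq_of_mul_eq hagree (a' := 1) (b' := ⟨x, hB⟩) h, map_one, one_mul]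

end Glue

section Main

variable {N H : Subgroup G} {hMN : ∀ g ∈ N, ∀ x ∈ N ⊓ H, g * x * g⁻¹ ∈ N ⊓ H}
  {hHN : ∀ g ∈ H, ∀ x ∈ N, g * x * g⁻¹ ∈ N} {hHM : ∀ g ∈ H, ∀ x ∈ N ⊓ H, g * x * g⁻¹ ∈ N ⊓ H}
  {hGN : ∀ g ∈ (⊤ : Subgroup G), ∀ x ∈ N, g * x * g⁻¹ ∈ N}
  {Vχ Vξ Vφ : Type u} [AddCommGroup Vχ] [Module k Vχ] [AddCommGroup Vξ] [Module k Vξ]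
  [AddCommGroup Vφ] [Module k Vφ]
  {χ : Representation k N Vχ} {ξ : Representation k ↥(N ⊓ H) Vξ}
  {φ : Representation k (stabilizerIn N (N ⊓ H) hMN ξ) Vφ}

local notation "Nξ" => stabilizerIn N (N ⊓ H) hMN ξ
local notation "Hχ" => stabilizerIn H N hHN χ
local notation "Hξ" => stabilizerIn H (N ⊓ H) hHM ξ
local notation "Gχ" => stabilizerIn ⊤ N hGN χ
local notation "ρInd" => indRep (Subgroup.inclusion (stabilizerIn_le N (N ⊓ H) hMN ξ)) φ

variable (hMN hHN hHM ξ) in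
include hHN in
lemma stabilizerIn_le_normalizer_stabilizerIn : Hξ ≤ Subgroup.normalizer Nξ := fun _ hg =>
  inertia_inf_normalizer_le hMN ξ
    ⟨stabilizerIn_le_inertia hHM ξ hg, le_normalizer_of_conj_mem hHN hg.1⟩

lemma coe_stabilizerIn_eq [FiniteDimensional k Vφ] (hξ : RepIsSimple ξ)
    (hres : RestrictIsoDep (N ⊓ H) Nξ ξ φ) (hind : IsRepIso χ ρInd) (hHχξ : Hχ ≤ Hξ) :
    (Hχ : Set G) = {g : G | g ∈ Hξ ∧ IsConjInv Nξ φ g} := by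
  ext g
  refine ⟨fun hg => ⟨hHχξ hg, ?_⟩, fun ⟨hgξ, hgφ⟩ => ⟨hgξ.1, ?_⟩⟩
  · exact IsConjInv.of_indRep hMN inf_le_left hξ hres (stabilizerIn_le_inertia hHM ξ (hHχξ hg))
      (hg.2.of_isRepIso hind)
  · exact (hgφ.indRep (le_normalizer_of_conj_mem hHN hgξ.1)
      (stabilizerIn_le_normalizer_stabilizerIn hMN hHN hHM ξ hgξ)).of_isRepIso hind.symm

lemma repExtendsDep_of_repExtendsDep_sup (hres : RestrictIsoDep (N ⊓ H) Nξ ξ φ)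
    (hext : RepExtendsDep Nξ (Hχ ⊔ Nξ) φ) : RepExtendsDep (N ⊓ H) Hχ ξ := by
  obtain ⟨σ, hσ⟩ := hext
  exact ((hres.trans (fun x hx _ => le_stabilizerIn_of_le hMN inf_le_left ξ hx) hσ).trans
    (fun _ _ hx => Subgroup.mem_sup_left hx)
    (restrictIsoDep_of_eq (ρL := σ.comp (Subgroup.inclusion le_sup_left))
      fun _ _ _ => rfl)).repExtendsDep

lemma repExtendsDep_of_repExtendsDep_stabilizerIn_top (hξ : RepIsSimple ξ)
    (hres : RestrictIsoDep (N ⊓ H) Nξ ξ φ) (hind : IsRepIso χ ρInd) (hHχξ : Hχ ≤ Hξ)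
    (hext : RepExtendsDep N Gχ χ) : RepExtendsDep (N ⊓ H) Hχ ξ := by
  obtain ⟨σ, hσ⟩ := repExtendsDep_iff_exists_eq.1 (hext.of_isRepIso hind)
  have hNG : N ≤ Gχ := le_stabilizerIn_of_le hGN le_top χ
  have hHG : Hχ ≤ Gχ := stabilizerIn_mono hHN hGN le_top χ
  have hpres : ∀ (h : Hχ) v, σ (Subgroup.inclusion hHG h) (indSingle _ φ v) ∈
      LinearMap.range (indSingle (stabilizerIn_le N (N ⊓ H) hMN ξ) φ) := fun h =>
    mem_range_indSingle_of_isConjIntertwining hMN inf_le_left hξ hres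
      (stabilizerIn_le_inertia hHM ξ (hHχξ h.2))
      (isConjIntertwining_of_restrict_eq hNG (fun x hx => hσ x hx (hNG hx))
        (Subgroup.inclusion hHG h))
  refine (hres.trans (fun x hx _ => le_stabilizerIn_of_le hMN inf_le_left ξ hx)
    (restrictIsoDep_of_eq (ρL := indCompressRep _ φ (σ.comp (Subgroup.inclusion hHG)) hpres)
      fun x hK hL => ?_)).repExtendsDep
  rw [indCompressRep_apply]
  show indCompress _ φ (σ ⟨x, hHG hL⟩) = _
  rw [hσ x hK.1]
  exact indCompress_indRep hK

lemma exists_restrict_eq_of_repExtendsDep [IsAlgClosed k] [FiniteDimensional k Vφ]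
    (hξ : RepIsSimple ξ) (hres : RestrictIsoDep (N ⊓ H) Nξ ξ φ) (hind : IsRepIso χ ρInd)
    (hHχξ : Hχ ≤ Hξ) (hext : RepExtendsDep (N ⊓ H) Hχ ξ) :
    ∃ σ : Representation k ↥(Hχ ⊔ Nξ) Vφ,
      ∀ x (hK : x ∈ Nξ) (hL : x ∈ Hχ ⊔ Nξ), σ ⟨x, hL⟩ = φ ⟨x, hK⟩ := by
  have hMNξ : N ⊓ H ≤ Nξ := le_stabilizerIn_of_le hMN inf_le_left ξ
  have hMHχ : N ⊓ H ≤ Hχ := fun _ hm => ⟨hm.2, isConjInv_of_mem hm.1⟩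
  obtain ⟨τ₀, hτ₀⟩ := hext
  have hτ₁ : RestrictIsoDep Nξ Hχ φ τ₀ :=
    hres.symm.trans (fun _ hx hxH => Subgroup.mem_inf.2 ⟨hx.1, hxH.1⟩) hτ₀
  obtain ⟨τ, hτ⟩ := hτ₁.exists_eq
  have htwist : ∀ h : Hχ, IsConjIntertwining Nξ φ φ h (τ h) := fun h =>
    IsConjIntertwining.of_comp_inclusion hMNξ
      (hξ.of_isRepIso ((restrictIsoDep_iff_isRepIso hMNξ).1 hres))
      (le_normalizer_of_conj_mem hHM h.2.1)
      (IsConjInv.of_indRep hMN inf_le_left hξ hres (stabilizerIn_le_inertia hHM ξ (hHχξ h.2))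
        (h.2.2.of_isRepIso hind))
      (isConjIntertwining_of_restrict_eq hMHχ (fun x hx => hτ x (hMNξ hx) (hMHχ hx)) h)
  exact exists_rep_sup (fun x hA hB => hτ x hB hA) htwist
    (fun _ hg => stabilizerIn_le_normalizer_stabilizerIn hMN hHN hHM ξ (hHχξ hg))

include hHN hHM in
lemma mem_stabilizerIn_of_mem_sup (hHχξ : Hχ ≤ Hξ) {x : G} (hx : x ∈ Hχ ⊔ Nξ) (hxN : x ∈ N) :
    x ∈ Nξ := by
  obtain ⟨a, ha, b, hb, rfl⟩ : x ∈ (Hχ : Set G) * Nξ := by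
    rw [← Subgroup.coe_mul_of_left_le_normalizer_right _ _
      fun _ hg => stabilizerIn_le_normalizer_stabilizerIn hMN hHN hHM ξ (hHχξ hg)]
    exact hx
  have haN : a ∈ N := by simpa using N.mul_mem hxN (N.inv_mem hb.1)
  exact Subgroup.mul_mem _ (le_stabilizerIn_of_le hMN inf_le_left ξ ⟨haN, ha.1⟩) hb

lemma coe_stabilizerIn_top_subset (hG : (N : Set G) * (H : Set G) = Set.univ) :
    (Gχ : Set G) ⊆ (Hχ : Set G) * N := by
  intro y hy
  obtain ⟨n, hn, h, hh, rfl⟩ : y ∈ (N : Set G) * H := hG ▸ Set.mem_univ y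
  have hhG : h ∈ Gχ := by
    simpa using Subgroup.mul_mem _ (Subgroup.inv_mem _ (le_stabilizerIn_of_le hGN le_top χ hn)) hy
  exact ⟨h, ⟨hh, hhG.2⟩, h⁻¹ * n * h, by simpa using hHN h⁻¹ (H.inv_mem hh) n hn, by group⟩

lemma repExtendsDep_stabilizerIn_top [IsAlgClosed k] [FiniteDimensional k Vφ]
    (hG : (N : Set G) * (H : Set G) = Set.univ) (hξ : RepIsSimple ξ)
    (hres : RestrictIsoDep (N ⊓ H) Nξ ξ φ) (hind : IsRepIso χ ρInd) (hHχξ : Hχ ≤ Hξ)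
    (hext : RepExtendsDep (N ⊓ H) Hχ ξ) : RepExtendsDep N Gχ χ := by
  obtain ⟨σ, hσ⟩ := exists_restrict_eq_of_repExtendsDep hξ hres hind hHχξ hext
  have hNG : N ≤ Gχ := le_stabilizerIn_of_le hGN le_top χ
  have hLG : Hχ ⊔ Nξ ≤ Gχ :=
    sup_le (stabilizerIn_mono hHN hGN le_top χ) ((stabilizerIn_le N _ hMN ξ).trans hNG)
  have hMackey := restrictIsoDep_indRep (stabilizerIn_le N _ hMN ξ) hLG hNG
    (fun x hx => hσ x hx (Subgroup.mem_sup_right hx))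
    ((coe_stabilizerIn_top_subset hG).trans
      (Set.mul_subset_mul_right (SetLike.coe_subset_coe.2 le_sup_left)))
    (fun _ hx hxN => mem_stabilizerIn_of_mem_sup hHχξ hx hxN)
  exact (hind.restrictIsoDep.trans (fun _ hx _ => hx) hMackey).repExtendsDep

end Main

theorem stabilizers_eq_and_extends_tfae_general
    (k : Type u) [Field k] [IsAlgClosed k]
    (G : Type u) [Group G]
    (N H : Subgroup G)
    (hG : (N : Set G) * (H : Set G) = Set.univ)
    -- `M := N ⊓ H` is normal in `N`:
    (hMN : ∀ g ∈ N, ∀ x ∈ N ⊓ H, g * x * g⁻¹ ∈ N ⊓ H)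
    -- `H` normalizes `N` and `M` (automatic since `N ⊴ G`; recorded to form the stabilizers):
    (hHN : ∀ g ∈ H, ∀ x ∈ N, g * x * g⁻¹ ∈ N)
    (hHM : ∀ g ∈ H, ∀ x ∈ N ⊓ H, g * x * g⁻¹ ∈ N ⊓ H)
    -- `G` normalizes `N` (automatic since `N ⊴ G`):
    (hGN : ∀ g ∈ (⊤ : Subgroup G), ∀ x ∈ N, g * x * g⁻¹ ∈ N)
    (Vχ : Type u) [AddCommGroup Vχ] [Module k Vχ]
    (Vξ : Type u) [AddCommGroup Vξ] [Module k Vξ]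
    (Vφ : Type u) [AddCommGroup Vφ] [Module k Vφ] [FiniteDimensional k Vφ]
    (χ : Representation k ↥N Vχ)
    (ξ : Representation k ↥(N ⊓ H : Subgroup G) Vξ) (hξ : RepIsSimple ξ)
    (φ : Representation k ↥(stabilizerIn N (N ⊓ H) hMN ξ) Vφ)
    -- `χ ≅ Ind^N_{N_ξ} φ`:
    (hind : IsRepIso χ (indRep (Subgroup.inclusion (stabilizerIn_le N (N ⊓ H) hMN ξ)) φ))
    -- `H_χ ≤ H_ξ`:
    (hHχξ : stabilizerIn H N hHN χ ≤ stabilizerIn H (N ⊓ H) hHM ξ)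
    -- `ξ ≅ Res^{N_ξ}_M φ`:
    (hres : RestrictIsoDep (N ⊓ H) (stabilizerIn N (N ⊓ H) hMN ξ) ξ φ) :
    -- (i) `H_χ = H_φ` and this group is contained in `H_ξ`:
    ((stabilizerIn H N hHN χ : Set G) =
        {g : G | g ∈ stabilizerIn H (N ⊓ H) hHM ξ ∧
          IsConjInv (stabilizerIn N (N ⊓ H) hMN ξ) φ g} ∧
      stabilizerIn H N hHN χ ≤ stabilizerIn H (N ⊓ H) hHM ξ) ∧
    -- (ii) `χ` extends to `G_χ` ⟺ `ξ` extends to `H_χ` ⟺ `φ` extends to `H_χ N_ξ`: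
    ((RepExtendsDep N (stabilizerIn ⊤ N hGN χ) χ ↔
        RepExtendsDep (N ⊓ H) (stabilizerIn H N hHN χ) ξ) ∧
      (RepExtendsDep (N ⊓ H) (stabilizerIn H N hHN χ) ξ ↔
        RepExtendsDep (stabilizerIn N (N ⊓ H) hMN ξ)
          (stabilizerIn H N hHN χ ⊔ stabilizerIn N (N ⊓ H) hMN ξ) φ)) :=
  ⟨⟨coe_stabilizerIn_eq hξ hres hind hHχξ, hHχξ⟩,
    ⟨repExtendsDep_of_repExtendsDep_stabilizerIn_top hξ hres hind hHχξ,
      repExtendsDep_stabilizerIn_top hG hξ hres hind hHχξ⟩,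
    ⟨fun hext => repExtendsDep_iff_exists_eq.2
        (exists_restrict_eq_of_repExtendsDep hξ hres hind hHχξ hext),
      repExtendsDep_of_repExtendsDep_sup hres⟩⟩

/-- Let `k` be an algebraically closed field of characteristic `ℓ > 0`.
Suppose `G = NH` is a finite group with `N ⊴ G` and `H ≤ G` such that `M := N ∩ H` is normal
in `N`. Let `χ` be a simple `kN`-module, `ξ` a simple `kM`-module lying under `χ`, and `φ` a
simple `kN_ξ`-module lying over `ξ` such that `χ ≅ Ind^N_{N_ξ} φ`. Assume further that
`H_χ ≤ H_ξ` and that `ξ ≅ Res^{N_ξ}_M φ`. Then (i) `H_χ = H_φ ≤ H_ξ`, and (ii) the following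
are equivalent: `χ` extends to `G_χ`; `ξ` extends to `H_χ`; `φ` extends to `H_χ N_ξ`. -/
theorem stabilizers_eq_and_extends_tfae
    (k : Type u) [Field k] [IsAlgClosed k] (ℓ : ℕ) [CharP k ℓ] (hℓ : 0 < ℓ)
    (G : Type u) [Group G] [Finite G]
    (N H : Subgroup G) (hN : N.Normal)
    (hG : (N : Set G) * (H : Set G) = Set.univ)
    -- `M := N ⊓ H` is normal in `N`:
    (hMN : ∀ g ∈ N, ∀ x ∈ N ⊓ H, g * x * g⁻¹ ∈ N ⊓ H)
    -- `H` normalizes `N` and `M` (automatic since `N ⊴ G`; recorded to form the stabilizers):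
    (hHN : ∀ g ∈ H, ∀ x ∈ N, g * x * g⁻¹ ∈ N)
    (hHM : ∀ g ∈ H, ∀ x ∈ N ⊓ H, g * x * g⁻¹ ∈ N ⊓ H)
    -- `G` normalizes `N` (automatic since `N ⊴ G`):
    (hGN : ∀ g ∈ (⊤ : Subgroup G), ∀ x ∈ N, g * x * g⁻¹ ∈ N)
    (Vχ : Type u) [AddCommGroup Vχ] [Module k Vχ] [FiniteDimensional k Vχ]
    (Vξ : Type u) [AddCommGroup Vξ] [Module k Vξ] [FiniteDimensional k Vξ]
    (Vφ : Type u) [AddCommGroup Vφ] [Module k Vφ] [FiniteDimensional k Vφ]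
    (χ : Representation k ↥N Vχ) (hχ : RepIsSimple χ)
    (ξ : Representation k ↥(N ⊓ H : Subgroup G) Vξ) (hξ : RepIsSimple ξ)
    (hunder : LiesOverDep (N ⊓ H) N ξ χ)
    (φ : Representation k ↥(stabilizerIn N (N ⊓ H) hMN ξ) Vφ) (hφ : RepIsSimple φ)
    (hover : LiesOverDep (N ⊓ H) (stabilizerIn N (N ⊓ H) hMN ξ) ξ φ)
    -- `χ ≅ Ind^N_{N_ξ} φ`:
    (hind : IsRepIso χ (indRep (Subgroup.inclusion (stabilizerIn_le N (N ⊓ H) hMN ξ)) φ))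
    -- `H_χ ≤ H_ξ`:
    (hHχξ : stabilizerIn H N hHN χ ≤ stabilizerIn H (N ⊓ H) hHM ξ)
    -- `ξ ≅ Res^{N_ξ}_M φ`:
    (hres : RestrictIsoDep (N ⊓ H) (stabilizerIn N (N ⊓ H) hMN ξ) ξ φ) :
    -- (i) `H_χ = H_φ` and this group is contained in `H_ξ`:
    ((stabilizerIn H N hHN χ : Set G) =
        {g : G | g ∈ stabilizerIn H (N ⊓ H) hHM ξ ∧
          IsConjInv (stabilizerIn N (N ⊓ H) hMN ξ) φ g} ∧
      stabilizerIn H N hHN χ ≤ stabilizerIn H (N ⊓ H) hHM ξ) ∧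
    -- (ii) `χ` extends to `G_χ` ⟺ `ξ` extends to `H_χ` ⟺ `φ` extends to `H_χ N_ξ`:
    ((RepExtendsDep N (stabilizerIn ⊤ N hGN χ) χ ↔
        RepExtendsDep (N ⊓ H) (stabilizerIn H N hHN χ) ξ) ∧
      (RepExtendsDep (N ⊓ H) (stabilizerIn H N hHN χ) ξ ↔
        RepExtendsDep (stabilizerIn N (N ⊓ H) hMN ξ)
          (stabilizerIn H N hHN χ ⊔ stabilizerIn N (N ⊓ H) hMN ξ) φ)) :=
  stabilizers_eq_and_extends_tfae_general k G N H hG hMN hHN hHM hGN Vχ Vξ Vφ χ ξ hξ φ hind hHχξ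
    hres
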